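/- arXiv:2103.01105 — 11 statements merged into one kernel-verified Lean document; each statement's English description precedes it below -/
import Mathlib

section
/- The map R(x₁,x₂,x₃) = (x₁x₂/(x₁+x₃), x₁+x₃, x₂x₃/(x₁+x₃)) on (ℝ_{>0})³ satisfies the tetrahedron equation R₂₄₅R₁₃₅R₁₂₆R₃₄₆ = R₃₄₆R₁₂₆R₁₃₅R₂₄₅ on (ℝ_{>0})⁶. -/
/-- `R_{ijk}` acting on the `i,j,k`-th coordinates (0-indexed, `i<j<k`) of `Xⁿ`. -/
def lift3 {X : Type*} {n : ℕ} (R : X × X × X → X × X × X) (i j k : Fin n)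
    (v : Fin n → X) : Fin n → X := fun t =>
  if t = i then (R (v i, v j, v k)).1
  else if t = j then (R (v i, v j, v k)).2.1
  else if t = k then (R (v i, v j, v k)).2.2
  else v t

noncomputable def Rmap (p : ℝ × ℝ × ℝ) : ℝ × ℝ × ℝ :=
  (p.1 * p.2.1 / (p.1 + p.2.2), p.1 + p.2.2, p.2.1 * p.2.2 / (p.1 + p.2.2))

set_option maxHeartbeats 1600000 in
/-- `R` satisfies the tetrahedron equation `R₂₄₅R₁₃₅R₁₂₆R₃₄₆ = R₃₄₆R₁₂₆R₁₃₅R₂₄₅`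
on `(ℝ_{>0})⁶` (indices written 1-based, here 0-based). -/
theorem Rmap_tetrahedron (v : Fin 6 → ℝ) (hv : ∀ t, 0 < v t) :
    lift3 Rmap 1 3 4 (lift3 Rmap 0 2 4 (lift3 Rmap 0 1 5 (lift3 Rmap 2 3 5 v))) =
    lift3 Rmap 2 3 5 (lift3 Rmap 0 1 5 (lift3 Rmap 0 2 4 (lift3 Rmap 1 3 4 v))) := by
  obtain ⟨a, b, c, d, e, f, ha, hb, hc, hd, he, hf, rfl⟩ :
      ∃ a b c d e f : ℝ, 0 < a ∧ 0 < b ∧ 0 < c ∧ 0 < d ∧ 0 < e ∧ 0 < f ∧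
        v = ![a, b, c, d, e, f] :=
    ⟨v 0, v 1, v 2, v 3, v 4, v 5, hv 0, hv 1, hv 2, hv 3, hv 4, hv 5,
      by funext t; fin_cases t <;> rfl⟩
  have hcf : (0:ℝ) < c + f := by linarith
  have hbe : (0:ℝ) < b + e := by linarith
  have hP : (0:ℝ) < a*c+a*f+d*f := by positivity
  have hT : (0:ℝ) < a*b+a*e+d*e := by positivity
  have hQ : (0:ℝ) < a*b*c + a*b*f + a*c*e + a*e*f + d*e*f := by positivity
  have hS : (0:ℝ) < (a*b*c + a*b*f + a*c*e + a*e*f + d*e*f) + c*d*e := by positivity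
  have hW : (0:ℝ) < (a*b*c + a*b*f + a*c*e + a*e*f + d*e*f) + b*d*f := by positivity
  have m4 : ∀ x0 x1 x2 x3 x4 x5 : ℝ, ![x0,x1,x2,x3,x4,x5] 4 = x4 := fun _ _ _ _ _ _ => rfl
  have m5 : ∀ x0 x1 x2 x3 x4 x5 : ℝ, ![x0,x1,x2,x3,x4,x5] 5 = x5 := fun _ _ _ _ _ _ => rfl
  have e1 : lift3 Rmap 2 3 5 ![a, b, c, d, e, f]
      = ![a, b, c*d/(c+f), c+f, e, d*f/(c+f)] := by
    funext t; fin_cases t <;>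
      simp (config := { decide := true }) [lift3, Rmap, Matrix.cons_val_zero, Matrix.cons_val_one, Matrix.cons_val_succ, Matrix.head_cons, m4, m5] <;>
      (try field_simp) <;> (try ring) <;> (try tauto)
  have e2 : lift3 Rmap 0 1 5 ![a, b, c*d/(c+f), c+f, e, d*f/(c+f)]
      = ![a*b*(c+f)/(a*c+a*f+d*f), (a*c+a*f+d*f)/(c+f), c*d/(c+f), c+f, e, b*d*f/(a*c+a*f+d*f)] := by
    funext t; fin_cases t <;>
      simp (config := { decide := true }) [lift3, Rmap, Matrix.cons_val_zero, Matrix.cons_val_one, Matrix.cons_val_succ, Matrix.head_cons, m4, m5] <;>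
      (try field_simp) <;> (try ring) <;> (try tauto)
  have e3 : lift3 Rmap 0 2 4 ![a*b*(c+f)/(a*c+a*f+d*f), (a*c+a*f+d*f)/(c+f), c*d/(c+f), c+f, e, b*d*f/(a*c+a*f+d*f)]
      = ![a*b*c*d/(a*b*c + a*b*f + a*c*e + a*e*f + d*e*f), (a*c+a*f+d*f)/(c+f), (a*b*c + a*b*f + a*c*e + a*e*f + d*e*f)/(a*c+a*f+d*f), c+f, c*d*e*(a*c+a*f+d*f)/((c+f)*(a*b*c + a*b*f + a*c*e + a*e*f + d*e*f)), b*d*f/(a*c+a*f+d*f)] := by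
    funext t; fin_cases t <;>
      simp (config := { decide := true }) [lift3, Rmap, Matrix.cons_val_zero, Matrix.cons_val_one, Matrix.cons_val_succ, Matrix.head_cons, m4, m5] <;>
      (try field_simp) <;> (try ring) <;> (try tauto)
  have e4 : lift3 Rmap 1 3 4 ![a*b*c*d/(a*b*c + a*b*f + a*c*e + a*e*f + d*e*f), (a*c+a*f+d*f)/(c+f), (a*b*c + a*b*f + a*c*e + a*e*f + d*e*f)/(a*c+a*f+d*f), c+f, c*d*e*(a*c+a*f+d*f)/((c+f)*(a*b*c + a*b*f + a*c*e + a*e*f + d*e*f)), b*d*f/(a*c+a*f+d*f)]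
      = ![a*b*c*d/(a*b*c + a*b*f + a*c*e + a*e*f + d*e*f), (c+f)*(a*b*c + a*b*f + a*c*e + a*e*f + d*e*f)/((a*b*c + a*b*f + a*c*e + a*e*f + d*e*f) + c*d*e), (a*b*c + a*b*f + a*c*e + a*e*f + d*e*f)/(a*c+a*f+d*f), (a*c+a*f+d*f)*((a*b*c + a*b*f + a*c*e + a*e*f + d*e*f) + c*d*e)/((c+f)*(a*b*c + a*b*f + a*c*e + a*e*f + d*e*f)), c*d*e*(c+f)/((a*b*c + a*b*f + a*c*e + a*e*f + d*e*f) + c*d*e), b*d*f/(a*c+a*f+d*f)] := by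
    funext t; fin_cases t <;>
      simp (config := { decide := true }) [lift3, Rmap, Matrix.cons_val_zero, Matrix.cons_val_one, Matrix.cons_val_succ, Matrix.head_cons, m4, m5] <;>
      (try field_simp) <;> (try ring) <;> (try tauto)
  have f1 : lift3 Rmap 1 3 4 ![a, b, c, d, e, f]
      = ![a, b*d/(b+e), c, b+e, d*e/(b+e), f] := by
    funext t; fin_cases t <;>
      simp (config := { decide := true }) [lift3, Rmap, Matrix.cons_val_zero, Matrix.cons_val_one, Matrix.cons_val_succ, Matrix.head_cons, m4, m5] <;>
      (try field_simp) <;> (try ring) <;> (try tauto)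
  have f2 : lift3 Rmap 0 2 4 ![a, b*d/(b+e), c, b+e, d*e/(b+e), f]
      = ![a*c*(b+e)/(a*b+a*e+d*e), b*d/(b+e), (a*b+a*e+d*e)/(b+e), b+e, c*d*e/(a*b+a*e+d*e), f] := by
    funext t; fin_cases t <;>
      simp (config := { decide := true }) [lift3, Rmap, Matrix.cons_val_zero, Matrix.cons_val_one, Matrix.cons_val_succ, Matrix.head_cons, m4, m5] <;>
      (try field_simp) <;> (try ring) <;> (try tauto)
  have f3 : lift3 Rmap 0 1 5 ![a*c*(b+e)/(a*b+a*e+d*e), b*d/(b+e), (a*b+a*e+d*e)/(b+e), b+e, c*d*e/(a*b+a*e+d*e), f]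
      = ![a*b*c*d/(a*b*c + a*b*f + a*c*e + a*e*f + d*e*f), (a*b*c + a*b*f + a*c*e + a*e*f + d*e*f)/(a*b+a*e+d*e), (a*b+a*e+d*e)/(b+e), b+e, c*d*e/(a*b+a*e+d*e), b*d*f*(a*b+a*e+d*e)/((b+e)*(a*b*c + a*b*f + a*c*e + a*e*f + d*e*f))] := by
    funext t; fin_cases t <;>
      simp (config := { decide := true }) [lift3, Rmap, Matrix.cons_val_zero, Matrix.cons_val_one, Matrix.cons_val_succ, Matrix.head_cons, m4, m5] <;>
      (try field_simp) <;> (try ring) <;> (try tauto)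
  have f4 : lift3 Rmap 2 3 5 ![a*b*c*d/(a*b*c + a*b*f + a*c*e + a*e*f + d*e*f), (a*b*c + a*b*f + a*c*e + a*e*f + d*e*f)/(a*b+a*e+d*e), (a*b+a*e+d*e)/(b+e), b+e, c*d*e/(a*b+a*e+d*e), b*d*f*(a*b+a*e+d*e)/((b+e)*(a*b*c + a*b*f + a*c*e + a*e*f + d*e*f))]
      = ![a*b*c*d/(a*b*c + a*b*f + a*c*e + a*e*f + d*e*f), (a*b*c + a*b*f + a*c*e + a*e*f + d*e*f)/(a*b+a*e+d*e), (b+e)*(a*b*c + a*b*f + a*c*e + a*e*f + d*e*f)/((a*b*c + a*b*f + a*c*e + a*e*f + d*e*f) + b*d*f), (a*b+a*e+d*e)*((a*b*c + a*b*f + a*c*e + a*e*f + d*e*f) + b*d*f)/((b+e)*(a*b*c + a*b*f + a*c*e + a*e*f + d*e*f)), c*d*e/(a*b+a*e+d*e), b*d*f*(b+e)/((a*b*c + a*b*f + a*c*e + a*e*f + d*e*f) + b*d*f)] := by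
    funext t; fin_cases t <;>
      simp (config := { decide := true }) [lift3, Rmap, Matrix.cons_val_zero, Matrix.cons_val_one, Matrix.cons_val_succ, Matrix.head_cons, m4, m5] <;>
      (try field_simp) <;> (try ring) <;> (try tauto)
  rw [e1, e2, e3, e4, f1, f2, f3, f4]
  funext t; fin_cases t <;>
    simp (config := { decide := true }) [Matrix.cons_val_zero, Matrix.cons_val_one, Matrix.cons_val_succ, Matrix.head_cons, m4, m5] <;>
    (try field_simp) <;> (try ring) <;> (try tauto)
end

section
/- The map R(x₁,x₂,x₃) = (x₁x₂/(x₁+x₃), x₁+x₃, x₂x₃/(x₁+x₃)) is boundarizable: if T = R₂₄₅R₁₃₅R₁₂₆R₃₄₆ denotes its tetrahedral composite on (ℝ_{>0})⁶, and (x₁,…,x₆) satisfies x₂=x₃ and x₅=x₆, then T(x₁,…,x₆) also satisfies these two equalities between its second and third, and fifth and sixth components. -/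
set_option maxHeartbeats 4000000


/-- The tetrahedral composite `T = R₂₄₅R₁₃₅R₁₂₆R₃₄₆` (1-based indices). -/
noncomputable def Tcomp (v : Fin 6 → ℝ) : Fin 6 → ℝ :=
  lift3 Rmap 1 3 4 (lift3 Rmap 0 2 4 (lift3 Rmap 0 1 5 (lift3 Rmap 2 3 5 v)))

/-- `R` is boundarizable: `T` preserves the subset `Y = {x₂ = x₃, x₅ = x₆}`. -/
theorem Rmap_boundarizable (v : Fin 6 → ℝ) (hv : ∀ t, 0 < v t)
    (h23 : v 1 = v 2) (h56 : v 4 = v 5) :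
    Tcomp v 1 = Tcomp v 2 ∧ Tcomp v 4 = Tcomp v 5 := by
  have h0 := hv 0
  have h1 := hv 1
  have h3 := hv 3
  have h4 := hv 4
  simp only [Tcomp, lift3, Rmap, Fin.isValue, show ((1:Fin 6) = 0) = False by decide,
    show ((1:Fin 6) = 1) = True by decide, show ((1:Fin 6) = 2) = False by decide,
    show ((1:Fin 6) = 3) = False by decide, show ((1:Fin 6) = 4) = False by decide,
    show ((1:Fin 6) = 5) = False by decide,
    show ((2:Fin 6) = 0) = False by decide, show ((2:Fin 6) = 1) = False by decide,
    show ((2:Fin 6) = 2) = True by decide, show ((2:Fin 6) = 3) = False by decide,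
    show ((2:Fin 6) = 4) = False by decide, show ((2:Fin 6) = 5) = False by decide,
    show ((4:Fin 6) = 0) = False by decide, show ((4:Fin 6) = 1) = False by decide,
    show ((4:Fin 6) = 2) = False by decide, show ((4:Fin 6) = 3) = False by decide,
    show ((4:Fin 6) = 4) = True by decide, show ((4:Fin 6) = 5) = False by decide,
    show ((5:Fin 6) = 0) = False by decide, show ((5:Fin 6) = 1) = False by decide,
    show ((5:Fin 6) = 2) = False by decide, show ((5:Fin 6) = 3) = False by decide,
    show ((5:Fin 6) = 5) = True by decide,
    show ((0:Fin 6) = 0) = True by decide, show ((0:Fin 6) = 1) = False by decide,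
    show ((0:Fin 6) = 2) = False by decide,
    show ((3:Fin 6) = 0) = False by decide, show ((3:Fin 6) = 1) = False by decide,
    show ((3:Fin 6) = 2) = False by decide, show ((3:Fin 6) = 3) = True by decide,
    show ((3:Fin 6) = 5) = False by decide, show ((3:Fin 6) = 4) = False by decide,
    show ((0:Fin 6) = 3) = False by decide, show ((0:Fin 6) = 4) = False by decide,
    show ((0:Fin 6) = 5) = False by decide, show ((5:Fin 6) = 4) = False by decide,
    if_true, if_false, ite_true, ite_false]
  rw [← h23, ← h56]
  set a := v 0; set b := v 1; set d := v 3; set e := v 4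
  have hbe : 0 < b + e := by linarith
  have had : 0 < a + d := by linarith
  constructor
  · field_simp
    ring
  · field_simp
    ring
end

section
/- The map J on (ℝ_{>0})⁴ given by J(x₁,x₂,x₃,x₄) = (x₁x₂²x₃/y₁, y₁/y₂, y₂²/y₁, x₂x₃x₄/y₂), where y₁ = x₁(x₂+x₄)² + x₃x₄² and y₂ = x₁(x₂+x₄) + x₃x₄, is involutive: J∘J = id. -/
/-- The 3D reflection map `J` on `(ℝ_{>0})⁴`. -/
noncomputable def Jmap (p : ℝ × ℝ × ℝ × ℝ) : ℝ × ℝ × ℝ × ℝ :=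
  let x₁ := p.1; let x₂ := p.2.1; let x₃ := p.2.2.1; let x₄ := p.2.2.2
  let y₁ := x₁ * (x₂ + x₄) ^ 2 + x₃ * x₄ ^ 2
  let y₂ := x₁ * (x₂ + x₄) + x₃ * x₄
  (x₁ * x₂ ^ 2 * x₃ / y₁, y₁ / y₂, y₂ ^ 2 / y₁, x₂ * x₃ * x₄ / y₂)

/-- `J` is involutive on the positive reals. -/
theorem Jmap_involutive (x₁ x₂ x₃ x₄ : ℝ)
    (h₁ : 0 < x₁) (h₂ : 0 < x₂) (h₃ : 0 < x₃) (h₄ : 0 < x₄) :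
    Jmap (Jmap (x₁, x₂, x₃, x₄)) = (x₁, x₂, x₃, x₄) := by
  have hy₁ : (0:ℝ) < x₁ * (x₂ + x₄) ^ 2 + x₃ * x₄ ^ 2 := by positivity
  have hy₂ : (0:ℝ) < x₁ * (x₂ + x₄) + x₃ * x₄ := by positivity
  simp only [Jmap, Prod.mk.injEq]
  refine ⟨?_, ?_, ?_, ?_⟩ <;> field_simp <;> ring
end

section
/- If an involutive tetrahedron map R is boundarizable with boundarization J = φ⁻¹∘T∘φ (where T is the tetrahedral composite restricted to Y and φ(x₁,x₂,x₃,x₄) = (x₁,x₂,x₂,x₃,x₄,x₄)), then J is involutive: J∘J = id. -/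
/-- The embedding `φ : X⁴ → Y ⊆ X⁶`, `φ(x₁,x₂,x₃,x₄) = (x₁,x₂,x₂,x₃,x₄,x₄)`. -/
def phiEmb {X : Type*} (p : X × X × X × X) : Fin 6 → X :=
  ![p.1, p.2.1, p.2.1, p.2.2.1, p.2.2.2, p.2.2.2]

lemma lift3_invol {X : Type*} {n : ℕ} (R : X × X × X → X × X × X)
    (hinv : ∀ p, R (R p) = p) (i j k : Fin n)
    (hij : i ≠ j) (hik : i ≠ k) (hjk : j ≠ k) (v : Fin n → X) :
    lift3 R i j k (lift3 R i j k v) = v := by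
  have wi : ∀ u : Fin n → X, lift3 R i j k u i = (R (u i, u j, u k)).1 := by
    intro u; simp [lift3]
  have wj : ∀ u : Fin n → X, lift3 R i j k u j = (R (u i, u j, u k)).2.1 := by
    intro u; simp [lift3, hij.symm]
  have wk : ∀ u : Fin n → X, lift3 R i j k u k = (R (u i, u j, u k)).2.2 := by
    intro u; simp [lift3, hik.symm, hjk.symm]
  have hR : R (lift3 R i j k v i, lift3 R i j k v j, lift3 R i j k v k)
      = (v i, v j, v k) := by
    rw [wi v, wj v, wk v]
    exact hinv (v i, v j, v k)
  funext t
  by_cases h1 : t = i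
  · subst h1; rw [wi, hR]
  by_cases h2 : t = j
  · subst h2; rw [wj, hR]
  by_cases h3 : t = k
  · subst h3; rw [wk, hR]
  · show (if t = i then _ else if t = j then _ else if t = k then _ else
        lift3 R i j k v t) = v t
    rw [if_neg h1, if_neg h2, if_neg h3]
    show (if t = i then _ else if t = j then _ else if t = k then _ else v t) = v t
    rw [if_neg h1, if_neg h2, if_neg h3]

/-- If `R` is an involutive tetrahedron map that is boundarizable, with
boundarization `J` (i.e. `φ ∘ J = T ∘ φ`), then `J` is involutive. -/
theorem boundarization_involutive {X : Type*}
    (R : X × X × X → X × X × X) (J : X × X × X × X → X × X × X × X)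
    (hinv : ∀ p, R (R p) = p)
    (hte : ∀ v : Fin 6 → X,
      lift3 R 1 3 4 (lift3 R 0 2 4 (lift3 R 0 1 5 (lift3 R 2 3 5 v))) =
      lift3 R 2 3 5 (lift3 R 0 1 5 (lift3 R 0 2 4 (lift3 R 1 3 4 v))))
    (hJ : ∀ p : X × X × X × X,
      phiEmb (J p) =
        lift3 R 1 3 4 (lift3 R 0 2 4 (lift3 R 0 1 5 (lift3 R 2 3 5 (phiEmb p))))) :
    ∀ p, J (J p) = p := by
  have hA := lift3_invol R hinv (1:Fin 6) 3 4 (by decide) (by decide) (by decide)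
  have hB := lift3_invol R hinv (0:Fin 6) 2 4 (by decide) (by decide) (by decide)
  have hC := lift3_invol R hinv (0:Fin 6) 1 5 (by decide) (by decide) (by decide)
  have hD := lift3_invol R hinv (2:Fin 6) 3 5 (by decide) (by decide) (by decide)
  intro p
  have key : phiEmb (J (J p)) = phiEmb p := by
    rw [hJ, hJ, hte, hA, hB, hC, hD]
  have e0 := congrFun key 0
  have e1 := congrFun key 1
  have e3 := congrFun key 3
  have e4 := congrFun key 4
  simp [phiEmb] at e0 e1 e3 e4
  exact Prod.ext e0 (Prod.ext e1 (Prod.ext e3 e4))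
end

section
/- For λ ∈ ℂ, the map R(λ)(x₁,x₂,x₃) = (x₁x₂/D, D, x₂x₃/D) with D = x₁+x₃+λx₁x₂x₃ is involutive wherever the relevant denominators are nonzero. -/
/-- The denominator `D = x₁ + x₃ + λx₁x₂x₃` of Sergeev's electrical solution. -/
def Dden (l : ℂ) (p : ℂ × ℂ × ℂ) : ℂ := p.1 + p.2.2 + l * p.1 * p.2.1 * p.2.2

/-- Sergeev's electrical tetrahedron map `R(λ)`. -/
noncomputable def Relec (l : ℂ) (p : ℂ × ℂ × ℂ) : ℂ × ℂ × ℂ :=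
  (p.1 * p.2.1 / Dden l p, Dden l p, p.2.1 * p.2.2 / Dden l p)

/-! For `y = R(λ)(x)` one has `y₁ + y₃ + λ y₁ y₂ y₃ = x₂ (x₁ + x₃ + λ x₁ x₂ x₃) / D = x₂`,
so the denominator of `R(λ)` at `y` is `x₂`. Applying `R(λ)` to `y` therefore divides
`y₁ y₂ = x₁ x₂` and `y₂ y₃ = x₂ x₃` by `x₂` and puts `x₂` back in the middle slot. -/

theorem Dden_Relec (l : ℂ) (p : ℂ × ℂ × ℂ) (h : Dden l p ≠ 0) :
    Dden l (Relec l p) = p.2.1 := by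
  rw [Dden, Relec]
  dsimp only
  -- keep `D` opaque, otherwise `field_simp` renormalizes it and no longer sees `h`
  generalize hD : Dden l p = D at h ⊢
  field_simp
  rw [← hD, Dden]
  ring

/-- `R(λ)` is involutive wherever the relevant denominators are nonzero. -/
theorem Rel_involutive (l : ℂ) (p : ℂ × ℂ × ℂ)
    (h1 : Dden l p ≠ 0) (h2 : Dden l (Relec l p) ≠ 0) :
    Relec l (Relec l p) = p := by
  obtain ⟨x₁, x₂, x₃⟩ := p
  have hD : Dden l (Relec l (x₁, x₂, x₃)) = x₂ := Dden_Relec l _ h1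
  have hx₂ : x₂ ≠ 0 := hD ▸ h2
  rw [Relec, hD]
  simp only [Relec, Prod.mk.injEq]
  refine ⟨?_, trivial, ?_⟩ <;> field_simp
end

section
/- The tropical map 𝓡(x₁,x₂,x₃) = (x₁+x₂−min(x₁,x₃), min(x₁,x₃), x₂+x₃−min(x₁,x₃)) on ℤ≥0³ satisfies the tetrahedron equation 𝓡₂₄₅𝓡₁₃₅𝓡₁₂₆𝓡₃₄₆ = 𝓡₃₄₆𝓡₁₂₆𝓡₁₃₅𝓡₂₄₅ on ℤ≥0⁶. -/
def Rtrop (p : ℤ × ℤ × ℤ) : ℤ × ℤ × ℤ :=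
  (p.1 + p.2.1 - min p.1 p.2.2, min p.1 p.2.2, p.2.1 + p.2.2 - min p.1 p.2.2)

theorem key (a b c d e f : ℤ) (ha : 0 ≤ a) (hb : 0 ≤ b) (hc : 0 ≤ c)
    (hd : 0 ≤ d) (he : 0 ≤ e) (hf : 0 ≤ f) :
    (a + b - (min (a) (d + f - (min (c) (f)))) + c + d - (min (c) (f)) - (min (a + b - (min (a) (d + f - (min (c) (f))))) (e)) = a + c - (min (a) (d + e - (min (b) (e)))) + b + d - (min (b) (e)) - (min (a + c - (min (a) (d + e - (min (b) (e))))) (f))) ∧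
    ((min (a) (d + f - (min (c) (f)))) + (min (c) (f)) - (min ((min (a) (d + f - (min (c) (f))))) (c + d - (min (c) (f)) + e - (min (a + b - (min (a) (d + f - (min (c) (f))))) (e)))) = (min (a + c - (min (a) (d + e - (min (b) (e))))) (f))) ∧
    ((min (a + b - (min (a) (d + f - (min (c) (f))))) (e)) = (min (a) (d + e - (min (b) (e)))) + (min (b) (e)) - (min ((min (a) (d + e - (min (b) (e))))) (b + d - (min (b) (e)) + f - (min (a + c - (min (a) (d + e - (min (b) (e))))) (f))))) ∧
    ((min ((min (a) (d + f - (min (c) (f))))) (c + d - (min (c) (f)) + e - (min (a + b - (min (a) (d + f - (min (c) (f))))) (e)))) = (min ((min (a) (d + e - (min (b) (e))))) (b + d - (min (b) (e)) + f - (min (a + c - (min (a) (d + e - (min (b) (e))))) (f))))) ∧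
    ((min (c) (f)) + c + d - (min (c) (f)) + e - (min (a + b - (min (a) (d + f - (min (c) (f))))) (e)) - (min ((min (a) (d + f - (min (c) (f))))) (c + d - (min (c) (f)) + e - (min (a + b - (min (a) (d + f - (min (c) (f))))) (e)))) = c + d + e - (min (b) (e)) - (min (a) (d + e - (min (b) (e))))) ∧
    (b + d + f - (min (c) (f)) - (min (a) (d + f - (min (c) (f)))) = (min (b) (e)) + b + d - (min (b) (e)) + f - (min (a + c - (min (a) (d + e - (min (b) (e))))) (f)) - (min ((min (a) (d + e - (min (b) (e))))) (b + d - (min (b) (e)) + f - (min (a + c - (min (a) (d + e - (min (b) (e))))) (f))))) ∧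
    (0 ≤ a + b - (min (a) (d + f - (min (c) (f)))) + c + d - (min (c) (f)) - (min (a + b - (min (a) (d + f - (min (c) (f))))) (e))) ∧
    (0 ≤ (min (a) (d + f - (min (c) (f)))) + (min (c) (f)) - (min ((min (a) (d + f - (min (c) (f))))) (c + d - (min (c) (f)) + e - (min (a + b - (min (a) (d + f - (min (c) (f))))) (e))))) ∧
    (0 ≤ (min (a + b - (min (a) (d + f - (min (c) (f))))) (e))) ∧
    (0 ≤ (min ((min (a) (d + f - (min (c) (f))))) (c + d - (min (c) (f)) + e - (min (a + b - (min (a) (d + f - (min (c) (f))))) (e))))) ∧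
    (0 ≤ (min (c) (f)) + c + d - (min (c) (f)) + e - (min (a + b - (min (a) (d + f - (min (c) (f))))) (e)) - (min ((min (a) (d + f - (min (c) (f))))) (c + d - (min (c) (f)) + e - (min (a + b - (min (a) (d + f - (min (c) (f))))) (e))))) ∧
    (0 ≤ b + d + f - (min (c) (f)) - (min (a) (d + f - (min (c) (f))))) := by omega

set_option maxHeartbeats 4000000 in
/-- `𝓡` satisfies the tetrahedron equation `𝓡₂₄₅𝓡₁₃₅𝓡₁₂₆𝓡₃₄₆ = 𝓡₃₄₆𝓡₁₂₆𝓡₁₃₅𝓡₂₄₅`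
on `ℤ≥0⁶`, the outputs remaining in `ℤ≥0`. -/
theorem Rtrop_tetrahedron (v : Fin 6 → ℤ) (hv : ∀ t, 0 ≤ v t) :
    lift3 Rtrop 1 3 4 (lift3 Rtrop 0 2 4 (lift3 Rtrop 0 1 5 (lift3 Rtrop 2 3 5 v))) =
      lift3 Rtrop 2 3 5 (lift3 Rtrop 0 1 5 (lift3 Rtrop 0 2 4 (lift3 Rtrop 1 3 4 v))) ∧
    (∀ t, 0 ≤ lift3 Rtrop 1 3 4
      (lift3 Rtrop 0 2 4 (lift3 Rtrop 0 1 5 (lift3 Rtrop 2 3 5 v))) t) := by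
  obtain ⟨e0, e1, e2, e3, e4, e5, p0, p1, p2, p3, p4, p5⟩ :=
    key (v 0) (v 1) (v 2) (v 3) (v 4) (v 5)
      (hv 0) (hv 1) (hv 2) (hv 3) (hv 4) (hv 5)
  have q0 : lift3 Rtrop 1 3 4 (lift3 Rtrop 0 2 4 (lift3 Rtrop 0 1 5 (lift3 Rtrop 2 3 5 v))) 0 =
      lift3 Rtrop 2 3 5 (lift3 Rtrop 0 1 5 (lift3 Rtrop 0 2 4 (lift3 Rtrop 1 3 4 v))) 0 := by
    simp only [lift3, Rtrop]
    simp only [Fin.reduceEq, reduceIte]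
    linear_combination e0
  have q1 : lift3 Rtrop 1 3 4 (lift3 Rtrop 0 2 4 (lift3 Rtrop 0 1 5 (lift3 Rtrop 2 3 5 v))) 1 =
      lift3 Rtrop 2 3 5 (lift3 Rtrop 0 1 5 (lift3 Rtrop 0 2 4 (lift3 Rtrop 1 3 4 v))) 1 := by
    simp only [lift3, Rtrop]
    simp only [Fin.reduceEq, reduceIte]
    linear_combination e1
  have q2 : lift3 Rtrop 1 3 4 (lift3 Rtrop 0 2 4 (lift3 Rtrop 0 1 5 (lift3 Rtrop 2 3 5 v))) 2 =
      lift3 Rtrop 2 3 5 (lift3 Rtrop 0 1 5 (lift3 Rtrop 0 2 4 (lift3 Rtrop 1 3 4 v))) 2 := by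
    simp only [lift3, Rtrop]
    simp only [Fin.reduceEq, reduceIte]
    linear_combination e2
  have q3 : lift3 Rtrop 1 3 4 (lift3 Rtrop 0 2 4 (lift3 Rtrop 0 1 5 (lift3 Rtrop 2 3 5 v))) 3 =
      lift3 Rtrop 2 3 5 (lift3 Rtrop 0 1 5 (lift3 Rtrop 0 2 4 (lift3 Rtrop 1 3 4 v))) 3 := by
    simp only [lift3, Rtrop]
    simp only [Fin.reduceEq, reduceIte]
    linear_combination e3
  have q4 : lift3 Rtrop 1 3 4 (lift3 Rtrop 0 2 4 (lift3 Rtrop 0 1 5 (lift3 Rtrop 2 3 5 v))) 4 =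
      lift3 Rtrop 2 3 5 (lift3 Rtrop 0 1 5 (lift3 Rtrop 0 2 4 (lift3 Rtrop 1 3 4 v))) 4 := by
    simp only [lift3, Rtrop]
    simp only [Fin.reduceEq, reduceIte]
    linear_combination e4
  have q5 : lift3 Rtrop 1 3 4 (lift3 Rtrop 0 2 4 (lift3 Rtrop 0 1 5 (lift3 Rtrop 2 3 5 v))) 5 =
      lift3 Rtrop 2 3 5 (lift3 Rtrop 0 1 5 (lift3 Rtrop 0 2 4 (lift3 Rtrop 1 3 4 v))) 5 := by
    simp only [lift3, Rtrop]
    simp only [Fin.reduceEq, reduceIte]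
    linear_combination e5
  have r0 : 0 ≤ lift3 Rtrop 1 3 4 (lift3 Rtrop 0 2 4 (lift3 Rtrop 0 1 5 (lift3 Rtrop 2 3 5 v))) 0 := by
    simp only [lift3, Rtrop]
    simp only [Fin.reduceEq, reduceIte]
    linarith [p0]
  have r1 : 0 ≤ lift3 Rtrop 1 3 4 (lift3 Rtrop 0 2 4 (lift3 Rtrop 0 1 5 (lift3 Rtrop 2 3 5 v))) 1 := by
    simp only [lift3, Rtrop]
    simp only [Fin.reduceEq, reduceIte]
    linarith [p1]
  have r2 : 0 ≤ lift3 Rtrop 1 3 4 (lift3 Rtrop 0 2 4 (lift3 Rtrop 0 1 5 (lift3 Rtrop 2 3 5 v))) 2 := by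
    simp only [lift3, Rtrop]
    simp only [Fin.reduceEq, reduceIte]
    linarith [p2]
  have r3 : 0 ≤ lift3 Rtrop 1 3 4 (lift3 Rtrop 0 2 4 (lift3 Rtrop 0 1 5 (lift3 Rtrop 2 3 5 v))) 3 := by
    simp only [lift3, Rtrop]
    simp only [Fin.reduceEq, reduceIte]
    linarith [p3]
  have r4 : 0 ≤ lift3 Rtrop 1 3 4 (lift3 Rtrop 0 2 4 (lift3 Rtrop 0 1 5 (lift3 Rtrop 2 3 5 v))) 4 := by
    simp only [lift3, Rtrop]
    simp only [Fin.reduceEq, reduceIte]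
    linarith [p4]
  have r5 : 0 ≤ lift3 Rtrop 1 3 4 (lift3 Rtrop 0 2 4 (lift3 Rtrop 0 1 5 (lift3 Rtrop 2 3 5 v))) 5 := by
    simp only [lift3, Rtrop]
    simp only [Fin.reduceEq, reduceIte]
    linarith [p5]
  refine ⟨funext fun t => ?_, fun t => ?_⟩ <;> fin_cases t <;>
    [exact q0; exact q1; exact q2; exact q3; exact q4; exact q5;
     exact r0; exact r1; exact r2; exact r3; exact r4; exact r5]
end

section
/- The tropical map 𝓙 on ℤ≥0⁴ given by 𝓙(x₁,x₂,x₃,x₄) = (x₁+2x₂+x₃−y₁, y₁−y₂, 2y₂−y₁, x₂+x₃+x₄−y₂), where y₁ = min(x₁+2·min(x₂,x₄), x₃+2x₄) and y₂ = min(x₁+min(x₂,x₄), x₃+x₄), is involutive: 𝓙∘𝓙 = id on ℤ≥0⁴. -/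
/-- The tropical 3D reflection map `𝓙`, defined on all of `ℤ⁴` by the same formula. -/
def Jtrop (p : ℤ × ℤ × ℤ × ℤ) : ℤ × ℤ × ℤ × ℤ :=
  let x₁ := p.1; let x₂ := p.2.1; let x₃ := p.2.2.1; let x₄ := p.2.2.2
  let y₁ := min (x₁ + 2 * min x₂ x₄) (x₃ + 2 * x₄)
  let y₂ := min (x₁ + min x₂ x₄) (x₃ + x₄)
  (x₁ + 2 * x₂ + x₃ - y₁, y₁ - y₂, 2 * y₂ - y₁, x₂ + x₃ + x₄ - y₂)

/-- On `ℤ≥0⁴`, all four components of `𝓙` are nonnegative and `𝓙∘𝓙 = id`. -/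
theorem Jtrop_involutive (x₁ x₂ x₃ x₄ : ℤ)
    (h₁ : 0 ≤ x₁) (h₂ : 0 ≤ x₂) (h₃ : 0 ≤ x₃) (h₄ : 0 ≤ x₄) :
    (0 ≤ (Jtrop (x₁, x₂, x₃, x₄)).1 ∧ 0 ≤ (Jtrop (x₁, x₂, x₃, x₄)).2.1 ∧
     0 ≤ (Jtrop (x₁, x₂, x₃, x₄)).2.2.1 ∧ 0 ≤ (Jtrop (x₁, x₂, x₃, x₄)).2.2.2) ∧
    Jtrop (Jtrop (x₁, x₂, x₃, x₄)) = (x₁, x₂, x₃, x₄) := by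
  simp only [Jtrop, Prod.mk.injEq]
  omega
end

section
/- The maps 𝓜(x₁,x₂,x₃) = (x₁+x₂−v, v, x₂+x₃−v) with v = min(x₁+x₂, x₃), on ℤ≥0×{0,1}×{0,1}, and 𝓝(x₁,x₂,x₃) = (x₁+w, x₂−w, x₃+w) with w = min(x₂, 1−x₁−x₃), on {0,1}×ℤ≥0×{0,1}, are both involutive; moreover 𝓝 is symmetric. -/
/-- The map `𝓜(x₁,x₂,x₃) = (x₁+x₂−v, v, x₂+x₃−v)`, `v = min(x₁+x₂, x₃)`,
defined on all of `ℤ³` by the same formula. -/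
def Mmap (p : ℤ × ℤ × ℤ) : ℤ × ℤ × ℤ :=
  let v := min (p.1 + p.2.1) p.2.2
  (p.1 + p.2.1 - v, v, p.2.1 + p.2.2 - v)

/-- The map `𝓝(x₁,x₂,x₃) = (x₁+w, x₂−w, x₃+w)`, `w = min(x₂, 1−x₁−x₃)`. -/
def Nmap (p : ℤ × ℤ × ℤ) : ℤ × ℤ × ℤ :=
  let w := min p.2.1 (1 - p.1 - p.2.2)
  (p.1 + w, p.2.1 - w, p.2.2 + w)

/-- `𝓜` (on `ℤ≥0 × {0,1} × {0,1}`) and `𝓝` (on `{0,1} × ℤ≥0 × {0,1}`) are involutive,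
preserve their respective target spaces, and `𝓝` is symmetric. -/
theorem Mmap_Nmap_involutive_symmetric :
    (∀ x₁ x₂ x₃ : ℤ, 0 ≤ x₁ → (x₂ = 0 ∨ x₂ = 1) → (x₃ = 0 ∨ x₃ = 1) →
      (0 ≤ (Mmap (x₁, x₂, x₃)).1 ∧
        ((Mmap (x₁, x₂, x₃)).2.1 = 0 ∨ (Mmap (x₁, x₂, x₃)).2.1 = 1) ∧
        ((Mmap (x₁, x₂, x₃)).2.2 = 0 ∨ (Mmap (x₁, x₂, x₃)).2.2 = 1)) ∧
      Mmap (Mmap (x₁, x₂, x₃)) = (x₁, x₂, x₃)) ∧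
    (∀ x₁ x₂ x₃ : ℤ, (x₁ = 0 ∨ x₁ = 1) → 0 ≤ x₂ → (x₃ = 0 ∨ x₃ = 1) →
      (((Nmap (x₁, x₂, x₃)).1 = 0 ∨ (Nmap (x₁, x₂, x₃)).1 = 1) ∧
        0 ≤ (Nmap (x₁, x₂, x₃)).2.1 ∧
        ((Nmap (x₁, x₂, x₃)).2.2 = 0 ∨ (Nmap (x₁, x₂, x₃)).2.2 = 1)) ∧
      Nmap (Nmap (x₁, x₂, x₃)) = (x₁, x₂, x₃) ∧
      Nmap (x₃, x₂, x₁) =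
        ((Nmap (x₁, x₂, x₃)).2.2, (Nmap (x₁, x₂, x₃)).2.1, (Nmap (x₁, x₂, x₃)).1)) := by
  constructor
  · intro x₁ x₂ x₃ h1 h2 h3
    simp only [Mmap, Prod.mk.injEq]
    omega
  · intro x₁ x₂ x₃ h1 h2 h3
    simp only [Nmap, Prod.mk.injEq]
    omega
end

section
/- The maps 𝓜 and 𝓝 satisfy the mixed tetrahedron equation 𝓝₂₄₅𝓜₁₃₅𝓜₁₂₆𝓝₃₄₆ = 𝓝₃₄₆𝓜₁₂₆𝓜₁₃₅𝓝₂₄₅ on ℤ≥0×{0,1}²×ℤ≥0×{0,1}². -/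
lemma lift3_at_fst {X : Type*} {n : ℕ} (R : X × X × X → X × X × X) {i j k t : Fin n}
    (h : t = i) (v : Fin n → X) : lift3 R i j k v t = (R (v i, v j, v k)).1 := by
  simp [lift3, h]

lemma lift3_at_snd {X : Type*} {n : ℕ} (R : X × X × X → X × X × X) {i j k t : Fin n}
    (h1 : t ≠ i) (h2 : t = j) (v : Fin n → X) :
    lift3 R i j k v t = (R (v i, v j, v k)).2.1 := by
  subst h2; simp [lift3, h1]

lemma lift3_at_trd {X : Type*} {n : ℕ} (R : X × X × X → X × X × X) {i j k t : Fin n}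
    (h1 : t ≠ i) (h2 : t ≠ j) (h3 : t = k) (v : Fin n → X) :
    lift3 R i j k v t = (R (v i, v j, v k)).2.2 := by
  subst h3; simp [lift3, h1, h2]

lemma lift3_other {X : Type*} {n : ℕ} (R : X × X × X → X × X × X) {i j k t : Fin n}
    (hti : t ≠ i) (htj : t ≠ j) (htk : t ≠ k) (v : Fin n → X) :
    lift3 R i j k v t = v t := by
  simp [lift3, hti, htj, htk]

set_option maxHeartbeats 1000000 in
/-- `𝓜` and `𝓝` satisfy the mixed tetrahedron equation
`𝓝₂₄₅𝓜₁₃₅𝓜₁₂₆𝓝₃₄₆ = 𝓝₃₄₆𝓜₁₂₆𝓜₁₃₅𝓝₂₄₅` on `ℤ≥0 × {0,1}² × ℤ≥0 × {0,1}²`. -/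
theorem Mmap_Nmap_tetrahedron (v : Fin 6 → ℤ)
    (h1 : 0 ≤ v 0) (h4 : 0 ≤ v 3)
    (h2 : v 1 = 0 ∨ v 1 = 1) (h3 : v 2 = 0 ∨ v 2 = 1)
    (h5 : v 4 = 0 ∨ v 4 = 1) (h6 : v 5 = 0 ∨ v 5 = 1) :
    lift3 Nmap 1 3 4 (lift3 Mmap 0 2 4 (lift3 Mmap 0 1 5 (lift3 Nmap 2 3 5 v))) =
    lift3 Nmap 2 3 5 (lift3 Mmap 0 1 5 (lift3 Mmap 0 2 4 (lift3 Nmap 1 3 4 v))) := by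
  funext t
  have b2 : 0 ≤ v 1 ∧ v 1 ≤ 1 := by rcases h2 with h | h <;> omega
  have b3 : 0 ≤ v 2 ∧ v 2 ≤ 1 := by rcases h3 with h | h <;> omega
  have b5 : 0 ≤ v 4 ∧ v 4 ≤ 1 := by rcases h5 with h | h <;> omega
  have b6 : 0 ≤ v 5 ∧ v 5 ≤ 1 := by rcases h6 with h | h <;> omega
  clear h2 h3 h5 h6
  fin_cases t <;>
    simp (config := { decide := true }) only
      [lift3_at_fst, lift3_at_snd, lift3_at_trd, lift3_other] <;>
    simp only [Mmap, Nmap] <;> omega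
end

section
/- The maps 𝓡 and 𝓜 satisfy the mixed tetrahedron equation 𝓡₁₂₃𝓜₁₄₅𝓜₂₄₆𝓜₃₅₆ = 𝓜₃₅₆𝓜₂₄₆𝓜₁₄₅𝓡₁₂₃ on ℤ≥0³×{0,1}³. -/
/-- `𝓡` and `𝓜` satisfy the mixed tetrahedron equation
`𝓡₁₂₃𝓜₁₄₅𝓜₂₄₆𝓜₃₅₆ = 𝓜₃₅₆𝓜₂₄₆𝓜₁₄₅𝓡₁₂₃` on `ℤ≥0³ × {0,1}³`. -/
theorem Rtrop_Mmap_tetrahedron (v : Fin 6 → ℤ)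
    (h1 : 0 ≤ v 0) (h2 : 0 ≤ v 1) (h3 : 0 ≤ v 2)
    (h4 : v 3 = 0 ∨ v 3 = 1) (h5 : v 4 = 0 ∨ v 4 = 1) (h6 : v 5 = 0 ∨ v 5 = 1) :
    lift3 Rtrop 0 1 2 (lift3 Mmap 0 3 4 (lift3 Mmap 1 3 5 (lift3 Mmap 2 4 5 v))) =
    lift3 Mmap 2 4 5 (lift3 Mmap 1 3 5 (lift3 Mmap 0 3 4 (lift3 Rtrop 0 1 2 v))) := by
  funext t
  fin_cases t <;>
  · simp +decide only [lift3, Rtrop, Mmap, Fin.isValue, if_true, if_false, Fin.reduceEq]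
    omega
end

section
/- The two-component map R on ((ℝ_{>0})²)³ sending ((x₁,y₁),(x₂,y₂),(x₃,y₃)) to ((x₁x₂/(x₁+x₃), (x₁+x₃)y₁y₂/(x₁y₁+x₃y₃)), (x₁+x₃, (x₁y₁+x₃y₃)/(x₁+x₃)), (x₂x₃/(x₁+x₃), (x₁+x₃)y₂y₃/(x₁y₁+x₃y₃))) is involutive, symmetric, and satisfies the tetrahedron equation R₂₄₅R₁₃₅R₁₂₆R₃₄₆ = R₃₄₆R₁₂₆R₁₃₅R₂₄₅ on ((ℝ_{>0})²)⁶. -/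
/-- The two-component tetrahedron map associated with the discrete modified KP equation,
on `X³` with `X = ℝ²` (pairs written `(x, y)`). -/
noncomputable def RmKP (p : (ℝ × ℝ) × (ℝ × ℝ) × (ℝ × ℝ)) : (ℝ × ℝ) × (ℝ × ℝ) × (ℝ × ℝ) :=
  let x₁ := p.1.1; let y₁ := p.1.2
  let x₂ := p.2.1.1; let y₂ := p.2.1.2
  let x₃ := p.2.2.1; let y₃ := p.2.2.2
  let s := x₁ + x₃
  let u := x₁ * y₁ + x₃ * y₃
  ((x₁ * x₂ / s, s * y₁ * y₂ / u), (s, u / s), (x₂ * x₃ / s, s * y₂ * y₃ / u))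

/-- Positivity of all components of a triple of pairs. -/
def posTriple (p : (ℝ × ℝ) × (ℝ × ℝ) × (ℝ × ℝ)) : Prop :=
  0 < p.1.1 ∧ 0 < p.1.2 ∧ 0 < p.2.1.1 ∧ 0 < p.2.1.2 ∧ 0 < p.2.2.1 ∧ 0 < p.2.2.2

private lemma lift3_step {n : ℕ} (R : (ℝ × ℝ) × (ℝ × ℝ) × (ℝ × ℝ) → (ℝ × ℝ) × (ℝ × ℝ) × (ℝ × ℝ))
    (i j k : Fin n) (v : Fin n → ℝ × ℝ) (a b c : ℝ × ℝ)
    (h : R (v i, v j, v k) = (a, b, c)) :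
    lift3 R i j k v = fun t => if t = i then a else if t = j then b else if t = k then c
      else v t := by
  funext t
  simp only [lift3, h]

set_option maxHeartbeats 1000000 in
private lemma RmKP_inv : ∀ p, posTriple p → RmKP (RmKP p) = p := by
  rintro ⟨⟨x1,y1⟩,⟨x2,y2⟩,⟨x3,y3⟩⟩ ⟨h1,h2,h3,h4,h5,h6⟩
  simp only [RmKP]
  have hs : x1 + x3 ≠ 0 := by positivity
  have hu : x1*y1 + x3*y3 ≠ 0 := by positivity
  refine Prod.ext ?_ (Prod.ext ?_ ?_) <;> refine Prod.ext ?_ ?_ <;> simp <;> field_simp <;> ring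

set_option maxHeartbeats 1000000 in
private lemma RmKP_symm : ∀ p, posTriple p →
    RmKP (p.2.2, p.2.1, p.1) = ((RmKP p).2.2, (RmKP p).2.1, (RmKP p).1) := by
  rintro ⟨⟨x1,y1⟩,⟨x2,y2⟩,⟨x3,y3⟩⟩ ⟨h1,h2,h3,h4,h5,h6⟩
  simp only [RmKP]
  have hs : x1 + x3 ≠ 0 := by positivity
  have hu : x1*y1 + x3*y3 ≠ 0 := by positivity
  refine Prod.ext ?_ (Prod.ext ?_ ?_) <;> refine Prod.ext ?_ ?_ <;> (try simp) <;> first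
  | (field_simp; try ring)
  | ring

set_option maxHeartbeats 4000000 in
private lemma RmKP_tetra :
    ∀ v : Fin 6 → ℝ × ℝ, (∀ t, 0 < (v t).1 ∧ 0 < (v t).2) →
      lift3 RmKP 1 3 4 (lift3 RmKP 0 2 4 (lift3 RmKP 0 1 5 (lift3 RmKP 2 3 5 v))) =
      lift3 RmKP 2 3 5 (lift3 RmKP 0 1 5 (lift3 RmKP 0 2 4 (lift3 RmKP 1 3 4 v))) := by
  intro v hv
  have hx0 : 0 < (v 0).1 := (hv 0).1
  have hy0 : 0 < (v 0).2 := (hv 0).2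
  have hx1 : 0 < (v 1).1 := (hv 1).1
  have hy1 : 0 < (v 1).2 := (hv 1).2
  have hx2 : 0 < (v 2).1 := (hv 2).1
  have hy2 : 0 < (v 2).2 := (hv 2).2
  have hx3 : 0 < (v 3).1 := (hv 3).1
  have hy3 : 0 < (v 3).2 := (hv 3).2
  have hx4 : 0 < (v 4).1 := (hv 4).1
  have hy4 : 0 < (v 4).2 := (hv 4).2
  have hx5 : 0 < (v 5).1 := (hv 5).1
  have hy5 : 0 < (v 5).2 := (hv 5).2
  obtain ⟨s, hs⟩ : ∃ x : ℝ, x = (v 2).1 + (v 5).1 := ⟨_, rfl⟩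
  obtain ⟨u, hu⟩ : ∃ x : ℝ, x = (v 2).1 * (v 2).2 + (v 5).1 * (v 5).2 := ⟨_, rfl⟩
  obtain ⟨p, hp⟩ : ∃ x : ℝ, x = (v 1).1 + (v 4).1 := ⟨_, rfl⟩
  obtain ⟨q, hq⟩ : ∃ x : ℝ, x = (v 1).1 * (v 1).2 + (v 4).1 * (v 4).2 := ⟨_, rfl⟩
  obtain ⟨A, hA⟩ : ∃ x : ℝ, x = (v 0).1 * s + (v 3).1 * (v 5).1 := ⟨_, rfl⟩
  obtain ⟨B, hB⟩ : ∃ x : ℝ, x = (v 0).1 * (v 0).2 * u + (v 3).1 * (v 5).1 * ((v 3).2 * (v 5).2) := ⟨_, rfl⟩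
  obtain ⟨C, hC⟩ : ∃ x : ℝ, x = (v 0).1 * (v 1).1 * s + (v 4).1 * A := ⟨_, rfl⟩
  obtain ⟨D, hD⟩ : ∃ x : ℝ, x = (v 0).1 * (v 1).1 * ((v 0).2 * (v 1).2) * u + (v 4).1 * (v 4).2 * B := ⟨_, rfl⟩
  obtain ⟨G, hG⟩ : ∃ x : ℝ, x = (v 0).1 * p + (v 3).1 * (v 4).1 := ⟨_, rfl⟩
  obtain ⟨H, hH⟩ : ∃ x : ℝ, x = (v 0).1 * (v 0).2 * q + (v 3).1 * (v 4).1 * ((v 3).2 * (v 4).2) := ⟨_, rfl⟩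
  obtain ⟨I, hI⟩ : ∃ x : ℝ, x = (v 0).1 * (v 2).1 * p + (v 5).1 * G := ⟨_, rfl⟩
  obtain ⟨J, hJ⟩ : ∃ x : ℝ, x = (v 0).1 * (v 2).1 * ((v 0).2 * (v 2).2) * q + (v 5).1 * (v 5).2 * H := ⟨_, rfl⟩
  have hs0 : 0 < s := by rw [hs]; positivity
  have hsn : s ≠ 0 := ne_of_gt hs0
  have hu0 : 0 < u := by rw [hu]; positivity
  have hun : u ≠ 0 := ne_of_gt hu0
  have hp0 : 0 < p := by rw [hp]; positivity
  have hpn : p ≠ 0 := ne_of_gt hp0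
  have hq0 : 0 < q := by rw [hq]; positivity
  have hqn : q ≠ 0 := ne_of_gt hq0
  have hA0 : 0 < A := by rw [hA]; positivity
  have hAn : A ≠ 0 := ne_of_gt hA0
  have hB0 : 0 < B := by rw [hB]; positivity
  have hBn : B ≠ 0 := ne_of_gt hB0
  have hC0 : 0 < C := by rw [hC]; positivity
  have hCn : C ≠ 0 := ne_of_gt hC0
  have hD0 : 0 < D := by rw [hD]; positivity
  have hDn : D ≠ 0 := ne_of_gt hD0
  have hG0 : 0 < G := by rw [hG]; positivity
  have hGn : G ≠ 0 := ne_of_gt hG0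
  have hH0 : 0 < H := by rw [hH]; positivity
  have hHn : H ≠ 0 := ne_of_gt hH0
  have hI0 : 0 < I := by rw [hI]; positivity
  have hIn : I ≠ 0 := ne_of_gt hI0
  have hJ0 : 0 < J := by rw [hJ]; positivity
  have hJn : J ≠ 0 := ne_of_gt hJ0
  have hE0 : 0 < (C + (v 2).1 * (v 3).1 * (v 4).1) := by positivity
  have hEn : (C + (v 2).1 * (v 3).1 * (v 4).1) ≠ 0 := ne_of_gt hE0
  have hF0 : 0 < (D + (v 2).1 * (v 3).1 * (v 4).1 * ((v 2).2 * (v 3).2 * (v 4).2)) := by positivity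
  have hFn : (D + (v 2).1 * (v 3).1 * (v 4).1 * ((v 2).2 * (v 3).2 * (v 4).2)) ≠ 0 := ne_of_gt hF0
  have hK0 : 0 < (I + (v 1).1 * (v 3).1 * (v 5).1) := by positivity
  have hKn : (I + (v 1).1 * (v 3).1 * (v 5).1) ≠ 0 := ne_of_gt hK0
  have hL0 : 0 < (J + (v 1).1 * (v 3).1 * (v 5).1 * ((v 1).2 * (v 3).2 * (v 5).2)) := by positivity
  have hLn : (J + (v 1).1 * (v 3).1 * (v 5).1 * ((v 1).2 * (v 3).2 * (v 5).2)) ≠ 0 := ne_of_gt hL0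
  have r1 : RmKP (v 2, v 3, v 5) =
      (((v 2).1 * (v 3).1 / s, s * (v 2).2 * (v 3).2 / u), (s, u / s), ((v 3).1 * (v 5).1 / s, s * (v 3).2 * (v 5).2 / u)) := by
    simp only [RmKP]
    try simp only [hs, hu]
    all_goals refine Prod.ext (Prod.ext ?_ ?_) (Prod.ext (Prod.ext ?_ ?_) (Prod.ext ?_ ?_))
    all_goals first
    | (field_simp; try ring)
    | ring
  have r2 : RmKP (v 0, v 1, ((v 3).1 * (v 5).1 / s, s * (v 3).2 * (v 5).2 / u)) =
      (((v 0).1 * (v 1).1 * s / A, A * (v 0).2 * (v 1).2 * u / (s * B)), (A / s, s * B / (u * A)), ((v 1).1 * (v 3).1 * (v 5).1 / A, A * (v 1).2 * (v 3).2 * (v 5).2 / B)) := by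
    simp only [RmKP]
    try simp only [hA, hB]
    all_goals refine Prod.ext (Prod.ext ?_ ?_) (Prod.ext (Prod.ext ?_ ?_) (Prod.ext ?_ ?_))
    all_goals first
    | (field_simp; try ring)
    | ring
  have r3 : RmKP (((v 0).1 * (v 1).1 * s / A, A * (v 0).2 * (v 1).2 * u / (s * B)), ((v 2).1 * (v 3).1 / s, s * (v 2).2 * (v 3).2 / u), v 4) =
      (((v 0).1 * (v 1).1 * (v 2).1 * (v 3).1 / C, C * (v 0).2 * (v 1).2 * (v 2).2 * (v 3).2 / D), (C / A, A * D / (B * C)), ((v 2).1 * (v 3).1 * (v 4).1 * A / (s * C), s * B * C * ((v 2).2 * (v 3).2 * (v 4).2) / (A * u * D))) := by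
    simp only [RmKP]
    try simp only [hC, hD]
    all_goals refine Prod.ext (Prod.ext ?_ ?_) (Prod.ext (Prod.ext ?_ ?_) (Prod.ext ?_ ?_))
    all_goals first
    | (field_simp; try ring)
    | ring
  have r4 : RmKP ((A / s, s * B / (u * A)), (s, u / s), ((v 2).1 * (v 3).1 * (v 4).1 * A / (s * C), s * B * C * ((v 2).2 * (v 3).2 * (v 4).2) / (A * u * D))) =
      ((s * C / (C + (v 2).1 * (v 3).1 * (v 4).1), u * D * (C + (v 2).1 * (v 3).1 * (v 4).1) / (s * C * (D + (v 2).1 * (v 3).1 * (v 4).1 * ((v 2).2 * (v 3).2 * (v 4).2)))), (A * (C + (v 2).1 * (v 3).1 * (v 4).1) / (s * C), s * B * C * (D + (v 2).1 * (v 3).1 * (v 4).1 * ((v 2).2 * (v 3).2 * (v 4).2)) / (u * A * D * (C + (v 2).1 * (v 3).1 * (v 4).1))), (s * ((v 2).1 * (v 3).1 * (v 4).1) / (C + (v 2).1 * (v 3).1 * (v 4).1), u * (C + (v 2).1 * (v 3).1 * (v 4).1) * ((v 2).2 * (v 3).2 * (v 4).2) / (s * (D + (v 2).1 * (v 3).1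 * (v 4).1 * ((v 2).2 * (v 3).2 * (v 4).2))))) := by
    simp only [RmKP]
    all_goals refine Prod.ext (Prod.ext ?_ ?_) (Prod.ext (Prod.ext ?_ ?_) (Prod.ext ?_ ?_))
    all_goals first
    | (field_simp; try ring)
    | ring
  have r1' : RmKP (v 1, v 3, v 4) =
      (((v 1).1 * (v 3).1 / p, p * (v 1).2 * (v 3).2 / q), (p, q / p), ((v 3).1 * (v 4).1 / p, p * (v 3).2 * (v 4).2 / q)) := by
    simp only [RmKP]
    try simp only [hp, hq]
    all_goals refine Prod.ext (Prod.ext ?_ ?_) (Prod.ext (Prod.ext ?_ ?_) (Prod.ext ?_ ?_))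
    all_goals first
    | (field_simp; try ring)
    | ring
  have r2' : RmKP (v 0, v 2, ((v 3).1 * (v 4).1 / p, p * (v 3).2 * (v 4).2 / q)) =
      (((v 0).1 * (v 2).1 * p / G, G * (v 0).2 * (v 2).2 * q / (p * H)), (G / p, p * H / (q * G)), ((v 2).1 * (v 3).1 * (v 4).1 / G, G * (v 2).2 * (v 3).2 * (v 4).2 / H)) := by
    simp only [RmKP]
    try simp only [hG, hH]
    all_goals refine Prod.ext (Prod.ext ?_ ?_) (Prod.ext (Prod.ext ?_ ?_) (Prod.ext ?_ ?_))
    all_goals first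
    | (field_simp; try ring)
    | ring
  have r3' : RmKP (((v 0).1 * (v 2).1 * p / G, G * (v 0).2 * (v 2).2 * q / (p * H)), ((v 1).1 * (v 3).1 / p, p * (v 1).2 * (v 3).2 / q), v 5) =
      (((v 0).1 * (v 1).1 * (v 2).1 * (v 3).1 / I, I * (v 0).2 * (v 1).2 * (v 2).2 * (v 3).2 / J), (I / G, G * J / (H * I)), ((v 1).1 * (v 3).1 * (v 5).1 * G / (p * I), p * H * I * ((v 1).2 * (v 3).2 * (v 5).2) / (G * q * J))) := by
    simp only [RmKP]
    try simp only [hI, hJ]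
    all_goals refine Prod.ext (Prod.ext ?_ ?_) (Prod.ext (Prod.ext ?_ ?_) (Prod.ext ?_ ?_))
    all_goals first
    | (field_simp; try ring)
    | ring
  have r4' : RmKP ((G / p, p * H / (q * G)), (p, q / p), ((v 1).1 * (v 3).1 * (v 5).1 * G / (p * I), p * H * I * ((v 1).2 * (v 3).2 * (v 5).2) / (G * q * J))) =
      ((p * I / (I + (v 1).1 * (v 3).1 * (v 5).1), q * J * (I + (v 1).1 * (v 3).1 * (v 5).1) / (p * I * (J + (v 1).1 * (v 3).1 * (v 5).1 * ((v 1).2 * (v 3).2 * (v 5).2)))), (G * (I + (v 1).1 * (v 3).1 * (v 5).1) / (p * I), p * H * I * (J + (v 1).1 * (v 3).1 * (v 5).1 * ((v 1).2 * (v 3).2 * (v 5).2)) / (q * G * J * (I + (v 1).1 * (v 3).1 * (v 5).1))), (p * ((v 1).1 * (v 3).1 * (v 5).1) / (I + (v 1).1 * (v 3).1 * (v 5).1), q * (I + (v 1).1 * (v 3).1 * (v 5).1) * ((v 1).2 * (v 3).2 * (v 5).2) / (p * (J + (v 1).1 * (v 3).1 * (v 5).1 * ((v 1).2 * (v 3).2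 * (v 5).2))))) := by
    simp only [RmKP]
    all_goals refine Prod.ext (Prod.ext ?_ ?_) (Prod.ext (Prod.ext ?_ ?_) (Prod.ext ?_ ?_))
    all_goals first
    | (field_simp; try ring)
    | ring
  have hL1x : lift3 RmKP 2 3 5 v =
      (fun t => if t = 2 then ((v 2).1 * (v 3).1 / s, s * (v 2).2 * (v 3).2 / u) else if t = 3 then (s, u / s) else if t = 5 then ((v 3).1 * (v 5).1 / s, s * (v 3).2 * (v 5).2 / u) else v t) := by
    funext t
    fin_cases t <;> simp only [lift3, Fin.isValue, Fin.reduceFinMk, Fin.reduceEq, reduceIte, r1]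
  have hL2x : lift3 RmKP 0 1 5 (fun t => if t = 2 then ((v 2).1 * (v 3).1 / s, s * (v 2).2 * (v 3).2 / u) else if t = 3 then (s, u / s) else if t = 5 then ((v 3).1 * (v 5).1 / s, s * (v 3).2 * (v 5).2 / u) else v t) =
      (fun t => if t = 0 then ((v 0).1 * (v 1).1 * s / A, A * (v 0).2 * (v 1).2 * u / (s * B)) else if t = 1 then (A / s, s * B / (u * A)) else if t = 2 then ((v 2).1 * (v 3).1 / s, s * (v 2).2 * (v 3).2 / u) else if t = 3 then (s, u / s) else if t = 5 then ((v 1).1 * (v 3).1 * (v 5).1 / A, A * (v 1).2 * (v 3).2 * (v 5).2 / B) else v t) := by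
    funext t
    fin_cases t <;> simp only [lift3, Fin.isValue, Fin.reduceFinMk, Fin.reduceEq, reduceIte, r2]
  have hL3x : lift3 RmKP 0 2 4 (fun t => if t = 0 then ((v 0).1 * (v 1).1 * s / A, A * (v 0).2 * (v 1).2 * u / (s * B)) else if t = 1 then (A / s, s * B / (u * A)) else if t = 2 then ((v 2).1 * (v 3).1 / s, s * (v 2).2 * (v 3).2 / u) else if t = 3 then (s, u / s) else if t = 5 then ((v 1).1 * (v 3).1 * (v 5).1 / A, A * (v 1).2 * (v 3).2 * (v 5).2 / B) else v t) =
      (fun t => if t = 0 then ((v 0).1 * (v 1).1 * (v 2).1 * (v 3).1 / C, C * (v 0).2 * (v 1).2 * (v 2).2 * (v 3).2 / D) else if t = 1 then (A / s, s * B / (u * A)) else if t = 2 then (C / A, A * D / (B * C)) else if t = 3 then (s, u / s) else if t = 4 then ((v 2).1 * (v 3).1 * (v 4).1 * A / (s * C), s * B * C * ((v 2).2 * (v 3).2 * (v 4).2) / (A * u * D)) else if t = 5 then ((v 1).1 * (v 3).1 * (v 5).1 / A, A * (v 1).2 * (v 3).2 * (v 5).2 / B) else v t) := by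
    funext t
    fin_cases t <;> simp only [lift3, Fin.isValue, Fin.reduceFinMk, Fin.reduceEq, reduceIte, r3]
  have hL4x : lift3 RmKP 1 3 4 (fun t => if t = 0 then ((v 0).1 * (v 1).1 * (v 2).1 * (v 3).1 / C, C * (v 0).2 * (v 1).2 * (v 2).2 * (v 3).2 / D) else if t = 1 then (A / s, s * B / (u * A)) else if t = 2 then (C / A, A * D / (B * C)) else if t = 3 then (s, u / s) else if t = 4 then ((v 2).1 * (v 3).1 * (v 4).1 * A / (s * C), s * B * C * ((v 2).2 * (v 3).2 * (v 4).2) / (A * u * D)) else if t = 5 then ((v 1).1 * (v 3).1 * (v 5).1 / A, A * (v 1).2 * (v 3).2 * (v 5).2 / B) else v t) =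
      (fun t => if t = 0 then ((v 0).1 * (v 1).1 * (v 2).1 * (v 3).1 / C, C * (v 0).2 * (v 1).2 * (v 2).2 * (v 3).2 / D) else if t = 1 then (s * C / (C + (v 2).1 * (v 3).1 * (v 4).1), u * D * (C + (v 2).1 * (v 3).1 * (v 4).1) / (s * C * (D + (v 2).1 * (v 3).1 * (v 4).1 * ((v 2).2 * (v 3).2 * (v 4).2)))) else if t = 2 then (C / A, A * D / (B * C)) else if t = 3 then (A * (C + (v 2).1 * (v 3).1 * (v 4).1) / (s * C), s * B * C * (D + (v 2).1 * (v 3).1 * (v 4).1 * ((v 2).2 * (v 3).2 * (v 4).2)) / (u * A * D * (C + (v 2).1 * (v 3).1 * (v 4).1))) else if t = 4 then (s * ((v 2).1 * (v 3).1 * (v 4).1) / (C + (v 2).1 * (v 3).1 * (v 4).1), u * (C + (v 2).1 * (v 3).1 * (v 4).1) * ((v 2).2 * (v 3).2 * (v 4).2) / (s * (D + (v 2).1 * (v 3).1 * (v 4).1 * ((v 2).2 * (v 3).2 * (v 4).2)))) else if t = 5 then ((v 1).1 * (v 3).1 * (v 5).1 / A, A * (v 1).2 * (v 3).2 * (v 5).2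 / B) else v t) := by
    funext t
    fin_cases t <;> simp only [lift3, Fin.isValue, Fin.reduceFinMk, Fin.reduceEq, reduceIte, r4]
  have hR1x : lift3 RmKP 1 3 4 v =
      (fun t => if t = 1 then ((v 1).1 * (v 3).1 / p, p * (v 1).2 * (v 3).2 / q) else if t = 3 then (p, q / p) else if t = 4 then ((v 3).1 * (v 4).1 / p, p * (v 3).2 * (v 4).2 / q) else v t) := by
    funext t
    fin_cases t <;> simp only [lift3, Fin.isValue, Fin.reduceFinMk, Fin.reduceEq, reduceIte, r1']
  have hR2x : lift3 RmKP 0 2 4 (fun t => if t = 1 then ((v 1).1 * (v 3).1 / p, p * (v 1).2 * (v 3).2 / q) else if t = 3 then (p, q / p) else if t = 4 then ((v 3).1 * (v 4).1 / p, p * (v 3).2 * (v 4).2 / q) else v t) =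
      (fun t => if t = 0 then ((v 0).1 * (v 2).1 * p / G, G * (v 0).2 * (v 2).2 * q / (p * H)) else if t = 1 then ((v 1).1 * (v 3).1 / p, p * (v 1).2 * (v 3).2 / q) else if t = 2 then (G / p, p * H / (q * G)) else if t = 3 then (p, q / p) else if t = 4 then ((v 2).1 * (v 3).1 * (v 4).1 / G, G * (v 2).2 * (v 3).2 * (v 4).2 / H) else v t) := by
    funext t
    fin_cases t <;> simp only [lift3, Fin.isValue, Fin.reduceFinMk, Fin.reduceEq, reduceIte, r2']
  have hR3x : lift3 RmKP 0 1 5 (fun t => if t = 0 then ((v 0).1 * (v 2).1 * p / G, G * (v 0).2 * (v 2).2 * q / (p * H)) else if t = 1 then ((v 1).1 * (v 3).1 / p, p * (v 1).2 * (v 3).2 / q) else if t = 2 then (G / p, p * H / (q * G)) else if t = 3 then (p, q / p) else if t = 4 then ((v 2).1 * (v 3).1 * (v 4).1 / G, G * (v 2).2 * (v 3).2 * (v 4).2 / H) else v t) =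
      (fun t => if t = 0 then ((v 0).1 * (v 1).1 * (v 2).1 * (v 3).1 / I, I * (v 0).2 * (v 1).2 * (v 2).2 * (v 3).2 / J) else if t = 1 then (I / G, G * J / (H * I)) else if t = 2 then (G / p, p * H / (q * G)) else if t = 3 then (p, q / p) else if t = 4 then ((v 2).1 * (v 3).1 * (v 4).1 / G, G * (v 2).2 * (v 3).2 * (v 4).2 / H) else if t = 5 then ((v 1).1 * (v 3).1 * (v 5).1 * G / (p * I), p * H * I * ((v 1).2 * (v 3).2 * (v 5).2) / (G * q * J)) else v t) := by
    funext t
    fin_cases t <;> simp only [lift3, Fin.isValue, Fin.reduceFinMk, Fin.reduceEq, reduceIte, r3']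
  have hR4x : lift3 RmKP 2 3 5 (fun t => if t = 0 then ((v 0).1 * (v 1).1 * (v 2).1 * (v 3).1 / I, I * (v 0).2 * (v 1).2 * (v 2).2 * (v 3).2 / J) else if t = 1 then (I / G, G * J / (H * I)) else if t = 2 then (G / p, p * H / (q * G)) else if t = 3 then (p, q / p) else if t = 4 then ((v 2).1 * (v 3).1 * (v 4).1 / G, G * (v 2).2 * (v 3).2 * (v 4).2 / H) else if t = 5 then ((v 1).1 * (v 3).1 * (v 5).1 * G / (p * I), p * H * I * ((v 1).2 * (v 3).2 * (v 5).2) / (G * q * J)) else v t) =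
      (fun t => if t = 0 then ((v 0).1 * (v 1).1 * (v 2).1 * (v 3).1 / I, I * (v 0).2 * (v 1).2 * (v 2).2 * (v 3).2 / J) else if t = 1 then (I / G, G * J / (H * I)) else if t = 2 then (p * I / (I + (v 1).1 * (v 3).1 * (v 5).1), q * J * (I + (v 1).1 * (v 3).1 * (v 5).1) / (p * I * (J + (v 1).1 * (v 3).1 * (v 5).1 * ((v 1).2 * (v 3).2 * (v 5).2)))) else if t = 3 then (G * (I + (v 1).1 * (v 3).1 * (v 5).1) / (p * I), p * H * I * (J + (v 1).1 * (v 3).1 * (v 5).1 * ((v 1).2 * (v 3).2 * (v 5).2)) / (q * G * J * (I + (v 1).1 * (v 3).1 * (v 5).1))) else if t = 4 then ((v 2).1 * (v 3).1 * (v 4).1 / G, G * (v 2).2 * (v 3).2 * (v 4).2 / H) else if t = 5 then (p * ((v 1).1 * (v 3).1 * (v 5).1) / (I + (v 1).1 * (v 3).1 * (v 5).1), q * (I + (v 1).1 * (v 3).1 * (v 5).1) * ((v 1).2 * (v 3).2 * (v 5).2) / (p * (J + (v 1).1 * (v 3).1 * (v 5).1 * ((v 1).2 * (v 3).2 * (v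 5).2)))) else v t) := by
    funext t
    fin_cases t <;> simp only [lift3, Fin.isValue, Fin.reduceFinMk, Fin.reduceEq, reduceIte, r4']
  have idI : I = C := by simp only [hI, hJ, hC, hD, hG, hH, hA, hB, hs, hu, hp, hq]; ring
  have idJ : J = D := by simp only [hI, hJ, hC, hD, hG, hH, hA, hB, hs, hu, hp, hq]; ring
  have idE : C + (v 2).1 * (v 3).1 * (v 4).1 = s * G := by simp only [hI, hJ, hC, hD, hG, hH, hA, hB, hs, hu, hp, hq]; ring
  have idF : D + (v 2).1 * (v 3).1 * (v 4).1 * ((v 2).2 * (v 3).2 * (v 4).2) = u * H := by simp only [hI, hJ, hC, hD, hG, hH, hA, hB, hs, hu, hp, hq]; ring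
  have idK : C + (v 1).1 * (v 3).1 * (v 5).1 = p * A := by simp only [hI, hJ, hC, hD, hG, hH, hA, hB, hs, hu, hp, hq]; ring
  have idL : D + (v 1).1 * (v 3).1 * (v 5).1 * ((v 1).2 * (v 3).2 * (v 5).2) = q * B := by simp only [hI, hJ, hC, hD, hG, hH, hA, hB, hs, hu, hp, hq]; ring
  rw [hL1x, hL2x, hL3x, hL4x, hR1x, hR2x, hR3x, hR4x]
  funext t
  fin_cases t <;>
      simp only [Fin.isValue, Fin.reduceFinMk, Fin.reduceEq, reduceIte] <;>
      rw [Prod.mk.injEq] <;>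
      refine ⟨?_, ?_⟩
  all_goals try simp only [idI, idJ, idE, idF, idK, idL]
  all_goals first
  | (field_simp; try ring)
  | ring

/-- The two-component map `R` is involutive, symmetric, and satisfies the tetrahedron
equation `R₂₄₅R₁₃₅R₁₂₆R₃₄₆ = R₃₄₆R₁₂₆R₁₃₅R₂₄₅` on `((ℝ_{>0})²)⁶`. -/
theorem RmKP_involutive_symmetric_tetrahedron :
    (∀ p, posTriple p → RmKP (RmKP p) = p) ∧
    (∀ p, posTriple p →
      RmKP (p.2.2, p.2.1, p.1) = ((RmKP p).2.2, (RmKP p).2.1, (RmKP p).1)) ∧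
    (∀ v : Fin 6 → ℝ × ℝ, (∀ t, 0 < (v t).1 ∧ 0 < (v t).2) →
      lift3 RmKP 1 3 4 (lift3 RmKP 0 2 4 (lift3 RmKP 0 1 5 (lift3 RmKP 2 3 5 v))) =
      lift3 RmKP 2 3 5 (lift3 RmKP 0 1 5 (lift3 RmKP 0 2 4 (lift3 RmKP 1 3 4 v)))) :=
  ⟨RmKP_inv, RmKP_symm, RmKP_tetra⟩
end
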